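/- Fix integers b ≥ 2 and m ≥ 2 and a real ε with 0 < ε ≤ (b^m − 1)·(b−1)/(b^m + b − 2) (in particular, for all sufficiently small ε > 0). Then (1 + ε/(b^m − 1 − ε))^{b−1} < 1 + ε, i.e., ((b^m − 1)/(b^m − 1 − ε))^{b−1} < 1 + ε. -/

import Mathlib

/-! Write `B = b^m − 1` and `n = b − 1`. Bernoulli's inequality `(1 − ε/B)^n ≥ 1 − nε/B` bounds the
left-hand side by `B/(B − nε)`, which is `< 1 + ε` exactly when `n(1 + ε) < B`. The upper bound on `ε`
gives `n(1 + ε) ≤ n(B + n + Bn)/(B + n)`, and this is `< B` as soon as `B² > n²(B + 1)`, which holds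
because `m ≥ 2` forces `B ≥ b² − 1 = n² + 2n`. -/

theorem div_sub_pow_lt_one_add {n : ℕ} {B ε : ℝ} (hε : 0 < ε) (h : n * (1 + ε) < B) :
    (B / (B - ε)) ^ n < 1 + ε := by
  rcases Nat.eq_zero_or_pos n with rfl | hn
  · simpa using hε
  have hn1 : (1 : ℝ) ≤ n := by exact_mod_cast hn
  have hB : 0 < B := by nlinarith
  have hnε : n * ε < B := by nlinarith
  have bernoulli : 1 - n * (ε / B) ≤ (1 - ε / B) ^ n := by
    have hεB : ε / B ≤ 1 := by rw [div_le_one hB]; nlinarith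
    simpa [sub_eq_add_neg] using one_add_mul_le_pow (a := -(ε / B)) (by linarith) n
  have hpos : 0 < 1 - n * (ε / B) := by
    rw [sub_pos, mul_div_assoc', div_lt_one hB]; exact hnε
  calc (B / (B - ε)) ^ n = ((1 - ε / B) ^ n)⁻¹ := by
        rw [← inv_pow, one_sub_div hB.ne', inv_div]
    _ ≤ (1 - n * (ε / B))⁻¹ := inv_anti₀ hpos bernoulli
    _ < 1 + ε := by
        rw [inv_lt_iff_one_lt_mul₀ hpos, mul_div_assoc', one_sub_div hB.ne', mul_div_assoc',
          one_lt_div hB]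
        nlinarith

theorem mul_one_add_lt_of_le_mul_div_add {n B ε : ℝ} (hn : 0 < n) (hB : n ^ 2 + 2 * n ≤ B)
    (hε : ε ≤ B * n / (B + n)) : n * (1 + ε) < B := by
  have hBn : 0 < B + n := by nlinarith
  rw [le_div_iff₀ hBn] at hε
  nlinarith

/-- For integers `b ≥ 2`, `m ≥ 2`, and `0 < ε ≤ (b^m − 1)(b − 1)/(b^m + b − 2)`,
one has `(1 + ε/(b^m − 1 − ε))^(b−1) < 1 + ε`, equivalently
`((b^m − 1)/(b^m − 1 − ε))^(b−1) < 1 + ε`. -/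
theorem bootstrap_growth_inequality (b m : ℕ) (hb : 2 ≤ b) (hm : 2 ≤ m) (ε : ℝ)
    (hε0 : 0 < ε)
    (hεub : ε ≤ ((b : ℝ) ^ m - 1) * ((b : ℝ) - 1) / ((b : ℝ) ^ m + (b : ℝ) - 2)) :
    (1 + ε / ((b : ℝ) ^ m - 1 - ε)) ^ (b - 1) < 1 + ε ∧
    (((b : ℝ) ^ m - 1) / ((b : ℝ) ^ m - 1 - ε)) ^ (b - 1) < 1 + ε := by
  have hb' : (2 : ℝ) ≤ b := by exact_mod_cast hb
  have hn : ((b - 1 : ℕ) : ℝ) = b - 1 := by push_cast [Nat.cast_sub (by omega : 1 ≤ b)]; ring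
  have hsq : (b : ℝ) ^ 2 ≤ (b : ℝ) ^ m := pow_le_pow_right₀ (by linarith) hm
  have hkey : ((b - 1 : ℕ) : ℝ) * (1 + ε) < (b : ℝ) ^ m - 1 := by
    rw [hn]
    refine mul_one_add_lt_of_le_mul_div_add (by linarith) (by nlinarith) ?_
    convert hεub using 2; ring
  have hεB : ε < (b : ℝ) ^ m - 1 := by rw [hn] at hkey; nlinarith
  have hrewrite : 1 + ε / ((b : ℝ) ^ m - 1 - ε) = ((b : ℝ) ^ m - 1) / ((b : ℝ) ^ m - 1 - ε) := by
    field_simp [(sub_pos.mpr hεB).ne']; ring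
  rw [hrewrite, and_self]
  exact div_sub_pow_lt_one_add hε0 hkey
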